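/- For every integer n > 3, every ν ≥ 0 and every x ≥ 0, |T_n(s²; x) − x²| ≤ ((5n−6)/(n²−5n+6)) x² + (4νn/(n²−5n+6) + 2n/(n²−5n+6)) x + (4ν²+6ν)/(n²−5n+6), where T_n(s²; x) denotes the Dunkl–Szász–Beta operator applied to g(s) = s². -/

import Mathlib

/-!
Write `y = n x` and `w_r = y ^ r / γ_ν(r)`. The Beta integral
`∫₀^∞ s^a (1+s)^{-(a+m+2)} ds = a! m! / (a+m+1)!` collapses the `r`-th term of `T_n(s²; x)` to
`r (r+1) w_r / ((n-1)(n-2)(n-3))`. The Dunkl coefficients satisfy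
`γ_ν(r+1) = (r + 1 + 2ν θ_{r+1}) γ_ν(r)` with `θ` the indicator of the odd integers, i.e.
`r w_r = y w_{r-1} - 2ν θ_r w_r`; summing this against `1`, `θ_r` and `r + 1` gives
`Σ r (r+1) w_r = (y² + (2 - 2ν) y) e_ν(y) + (4ν² - 2ν) o_ν(y)`, where `o_ν` is the odd part of
`e_ν`. Hence `T_n(s²; x) - x² = ((5n-6) x² + (2-2ν) n x + (4ν²-2ν) β) / ((n-2)(n-3))` with
`β = o_ν(y) / e_ν(y) ∈ [0, 1]`, and the bound follows from the triangle inequality.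
-/

open MeasureTheory Filter

/-- Dunkl coefficients: `γ_ν(2r) = 2^(2r) r! Γ(r+ν+1/2)/Γ(ν+1/2)`,
`γ_ν(2r+1) = 2^(2r+1) r! Γ(r+ν+3/2)/Γ(ν+1/2)`. -/
noncomputable def dGamma (ν : ℝ) (r : ℕ) : ℝ :=
  if r % 2 = 0 then
    2 ^ r * (Nat.factorial (r / 2)) * Real.Gamma ((r / 2 : ℕ) + ν + 1 / 2) / Real.Gamma (ν + 1 / 2)
  else
    2 ^ r * (Nat.factorial (r / 2)) * Real.Gamma ((r / 2 : ℕ) + ν + 3 / 2) / Real.Gamma (ν + 1 / 2)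

/-- Dunkl exponential `: e_ν(x) = Σ_{r=0}^∞ x^r/γ_ν(r)`. -/
noncomputable def eDunkl (ν x : ℝ) : ℝ := ∑' r : ℕ, x ^ r / dGamma ν r

/-- Dunkl–Szász–Beta operator
`T_n(g;x) = ((n−1)/e_ν(nx)) Σ_{r=1}^∞ C(n+r−2,r−1)(nx)^r/γ_ν(r) ∫_0^∞ s^{r−1}(1+s)^{−(n+r−1)} g(s) ds + g(0)/e_ν(nx)`
(the sum over `r ≥ 1` is written via the index shift `r = k+1`). -/
noncomputable def Tn (ν : ℝ) (n : ℕ) (g : ℝ → ℝ) (x : ℝ) : ℝ :=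
  ((n : ℝ) - 1) / eDunkl ν (n * x) *
      ∑' k : ℕ, (Nat.choose (n + k - 1) k : ℝ) * (n * x) ^ (k + 1) / dGamma ν (k + 1) *
        ∫ s in Set.Ioi (0 : ℝ), s ^ k / (1 + s) ^ (n + k) * g s
    + g 0 / eDunkl ν (n * x)

def oddIndicator (r : ℕ) : ℝ := if r % 2 = 1 then 1 else 0

lemma oddIndicator_zero : oddIndicator 0 = 0 := rfl

lemma oddIndicator_succ (r : ℕ) : oddIndicator (r + 1) = 1 - oddIndicator r := by
  unfold oddIndicator
  rcases Nat.mod_two_eq_zero_or_one r with h | h <;> simp [h, Nat.succ_mod_two_eq_one_iff]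

lemma oddIndicator_mul_self (r : ℕ) : oddIndicator r * oddIndicator r = oddIndicator r := by
  unfold oddIndicator; split <;> norm_num

lemma oddIndicator_nonneg (r : ℕ) : 0 ≤ oddIndicator r := by
  unfold oddIndicator; split <;> norm_num

lemma oddIndicator_le_one (r : ℕ) : oddIndicator r ≤ 1 := by
  unfold oddIndicator; split <;> norm_num

section DunklCoefficients

variable {ν : ℝ}

lemma dGamma_zero (hν : 0 ≤ ν) : dGamma ν 0 = 1 := by
  have : Real.Gamma (ν + 2⁻¹) ≠ 0 := (Real.Gamma_pos_of_pos (by positivity)).ne'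
  simp [dGamma, this]

lemma dGamma_succ (hν : 0 ≤ ν) (r : ℕ) :
    dGamma ν (r + 1) = (r + 1 + 2 * ν * oddIndicator (r + 1)) * dGamma ν r := by
  rcases Nat.even_or_odd' r with ⟨m, rfl | rfl⟩
  · have hG : Real.Gamma (m + ν + 3 / 2) = (m + ν + 1 / 2) * Real.Gamma (m + ν + 1 / 2) := by
      rw [← Real.Gamma_add_one (by positivity)]; ring_nf
    simp only [dGamma, oddIndicator, show (2 * m + 1) % 2 = 1 by omega,
      show (2 * m) % 2 = 0 by omega, show (2 * m + 1) / 2 = m by omega,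
      show 2 * m / 2 = m by omega, hG]
    push_cast; ring
  · simp only [dGamma, oddIndicator, show (2 * m + 1 + 1) % 2 = 0 by omega,
      show (2 * m + 1) % 2 = 1 by omega, show (2 * m + 1 + 1) / 2 = m + 1 by omega,
      show (2 * m + 1) / 2 = m by omega, Nat.factorial_succ]
    push_cast; ring_nf

lemma dGamma_pos (hν : 0 ≤ ν) (r : ℕ) : 0 < dGamma ν r := by
  induction r with
  | zero => simp [dGamma_zero hν]
  | succ r ih =>
    rw [dGamma_succ hν]
    have := oddIndicator_nonneg (r + 1)
    positivity

lemma factorial_le_dGamma (hν : 0 ≤ ν) (r : ℕ) : (r.factorial : ℝ) ≤ dGamma ν r := by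
  induction r with
  | zero => simp [dGamma_zero hν]
  | succ r ih =>
    rw [dGamma_succ hν, Nat.factorial_succ, Nat.cast_mul]
    have := oddIndicator_nonneg (r + 1)
    gcongr
    push_cast
    nlinarith

end DunklCoefficients

section BetaIntegral

open Set

lemma continuousOn_pow_div_one_add_pow (a b : ℕ) :
    ContinuousOn (fun s : ℝ => s ^ a / (1 + s) ^ b) (Ici 0) :=
  ContinuousOn.div (by fun_prop) (by fun_prop) fun s (hs : 0 ≤ s) => by positivity

lemma integrableOn_pow_div_one_add_pow {a b : ℕ} (h : a + 2 ≤ b) :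
    IntegrableOn (fun s : ℝ => s ^ a / (1 + s) ^ b) (Ioi 0) := by
  have hg : IntegrableOn (fun s : ℝ => (s + 1) ^ (-2 : ℝ)) (Ioi 0) :=
    integrableOn_add_rpow_Ioi_of_lt (by norm_num) (by norm_num)
  refine hg.mono' (((continuousOn_pow_div_one_add_pow a b).mono Ioi_subset_Ici_self)
    |>.aestronglyMeasurable measurableSet_Ioi) ?_
  filter_upwards [ae_restrict_mem measurableSet_Ioi] with s (hs : 0 < s)
  rw [Real.norm_of_nonneg (by positivity), Real.rpow_neg (by positivity), add_comm s,
    Real.rpow_two, div_le_iff₀ (by positivity), inv_mul_eq_div, le_div_iff₀ (by positivity)]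
  calc s ^ a * (1 + s) ^ 2 ≤ (1 + s) ^ a * (1 + s) ^ 2 := by gcongr; linarith
    _ = (1 + s) ^ (a + 2) := by rw [pow_add]
    _ ≤ (1 + s) ^ b := pow_le_pow_right₀ (by linarith) h

lemma tendsto_pow_div_one_add_pow_atTop {a c : ℕ} (h : a < c) :
    Tendsto (fun s : ℝ => s ^ a / (1 + s) ^ c) atTop (nhds 0) := by
  have hlim : Tendsto (fun s : ℝ => ((1 + s) ^ (c - a))⁻¹) atTop (nhds 0) :=
    tendsto_inv_atTop_zero.comp ((tendsto_pow_atTop (by omega)).comp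
      (tendsto_atTop_add_const_left _ 1 tendsto_id))
  refine tendsto_of_tendsto_of_tendsto_of_le_of_le' tendsto_const_nhds hlim ?_ ?_
  · filter_upwards [eventually_ge_atTop 0] with s hs using by positivity
  · filter_upwards [eventually_ge_atTop 0] with s (hs : 0 ≤ s)
    rw [div_le_iff₀ (by positivity), ← div_eq_inv_mul, le_div_iff₀ (by positivity)]
    calc s ^ a * (1 + s) ^ (c - a) ≤ (1 + s) ^ a * (1 + s) ^ (c - a) := by gcongr; linarith
      _ = (1 + s) ^ c := by rw [← pow_add, Nat.add_sub_cancel' h.le]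

lemma hasDerivAt_pow_div_one_add_pow (a c : ℕ) {s : ℝ} (hs : 1 + s ≠ 0) :
    HasDerivAt (fun s => s ^ a / (1 + s) ^ c)
      (a * (s ^ (a - 1) / (1 + s) ^ c) - c * (s ^ a / (1 + s) ^ (c + 1))) s := by
  refine ((hasDerivAt_pow a s).fun_div (((hasDerivAt_id' s).const_add 1).fun_pow c)
    (pow_ne_zero c hs)).congr_deriv ?_
  rcases c with _ | c
  · simp
  · simp only [Nat.add_sub_cancel]; push_cast; field_simp; ring

lemma integral_pow_div_one_add_pow_by_parts {a c : ℕ} (h : a + 1 ≤ c) :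
    (c : ℝ) * ∫ s in Ioi (0 : ℝ), s ^ a / (1 + s) ^ (c + 1)
      = a * (∫ s in Ioi (0 : ℝ), s ^ (a - 1) / (1 + s) ^ c) + 0 ^ a := by
  have hint₁ : IntegrableOn (fun s : ℝ => a * (s ^ (a - 1) / (1 + s) ^ c)) (Ioi 0) := by
    rcases a with _ | a
    · simp
    · exact (integrableOn_pow_div_one_add_pow (by omega)).const_mul _
  have hint₂ : IntegrableOn (fun s : ℝ => c * (s ^ a / (1 + s) ^ (c + 1))) (Ioi 0) :=
    (integrableOn_pow_div_one_add_pow (by omega)).const_mul _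
  have key := integral_Ioi_of_hasDerivAt_of_tendsto'
    (fun s (hs : 0 ≤ s) => hasDerivAt_pow_div_one_add_pow a c (by positivity : 1 + s ≠ 0))
    (hint₁.sub hint₂) (tendsto_pow_div_one_add_pow_atTop (by omega))
  rw [integral_sub hint₁ hint₂, integral_const_mul, integral_const_mul] at key
  simp only [add_zero, one_pow, div_one, zero_sub] at key
  linarith

lemma integral_pow_div_one_add_pow (a m : ℕ) :
    ∫ s in Ioi (0 : ℝ), s ^ a / (1 + s) ^ (a + m + 2)
      = (a.factorial * m.factorial : ℝ) / (a + m + 1).factorial := by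
  induction a with
  | zero =>
    have h := integral_pow_div_one_add_pow_by_parts (a := 0) (c := m + 1) (by omega)
    simp only [pow_zero, show m + 1 + 1 = m + 2 from rfl] at h
    simp only [zero_add, Nat.factorial_zero, Nat.factorial_succ m]
    push_cast at h ⊢
    field_simp
    linear_combination h
  | succ a ih =>
    have h := integral_pow_div_one_add_pow_by_parts (a := a + 1) (c := a + m + 2) (by omega)
    rw [show a + m + 2 + 1 = a + 1 + m + 2 by omega, Nat.add_sub_cancel, ih,
      zero_pow (Nat.succ_ne_zero a)] at h
    rw [show a + 1 + m + 1 = a + m + 1 + 1 by omega, Nat.factorial_succ, Nat.factorial_succ]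
    push_cast at h ⊢
    field_simp at h ⊢
    linear_combination h

end BetaIntegral

noncomputable def dunklTerm (ν y : ℝ) (r : ℕ) : ℝ := y ^ r / dGamma ν r

noncomputable def eDunklOdd (ν y : ℝ) : ℝ := ∑' r, oddIndicator r * dunklTerm ν y r

section DunklSeries

variable {ν y : ℝ}

lemma eDunkl_eq_tsum_dunklTerm : eDunkl ν y = ∑' r, dunklTerm ν y r := rfl

lemma dunklTerm_nonneg (hν : 0 ≤ ν) (hy : 0 ≤ y) (r : ℕ) : 0 ≤ dunklTerm ν y r :=
  div_nonneg (pow_nonneg hy r) (dGamma_pos hν r).le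

lemma succ_mul_dunklTerm_succ (hν : 0 ≤ ν) (r : ℕ) :
    (r + 1) * dunklTerm ν y (r + 1)
      = y * dunklTerm ν y r - 2 * ν * oddIndicator (r + 1) * dunklTerm ν y (r + 1) := by
  have := (dGamma_pos hν r).ne'
  have := (dGamma_pos hν (r + 1)).ne'
  unfold dunklTerm
  field_simp
  rw [dGamma_succ hν]
  ring

lemma summable_mul_dunklTerm (hν : 0 ≤ ν) (hy : 0 ≤ y) {f : ℕ → ℝ} {C a : ℝ}
    (hf : ∀ r, |f r| ≤ C * a ^ r) : Summable fun r => f r * dunklTerm ν y r := by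
  refine Summable.of_norm_bounded ((Real.summable_pow_div_factorial (a * y)).mul_left C)
    fun r => ?_
  have hterm : dunklTerm ν y r ≤ y ^ r / r.factorial :=
    div_le_div_of_nonneg_left (pow_nonneg hy r) (by positivity) (factorial_le_dGamma hν r)
  calc ‖f r * dunklTerm ν y r‖ = |f r| * dunklTerm ν y r := by
        rw [norm_mul, Real.norm_eq_abs, Real.norm_of_nonneg (dunklTerm_nonneg hν hy r)]
    _ ≤ C * a ^ r * (y ^ r / r.factorial) :=
        mul_le_mul (hf r) hterm (dunklTerm_nonneg hν hy r) ((abs_nonneg _).trans (hf r))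
    _ = C * ((a * y) ^ r / r.factorial) := by ring

lemma summable_dunklTerm (hν : 0 ≤ ν) (hy : 0 ≤ y) : Summable (dunklTerm ν y) := by
  simpa using summable_mul_dunklTerm hν hy (f := 1) (C := 1) (a := 1) (by simp)

lemma natCast_add_one_le_two_pow (r : ℕ) : (r : ℝ) + 1 ≤ 2 ^ r := by
  exact_mod_cast Nat.lt_two_pow_self

lemma tsum_mul_natCast_mul_dunklTerm (hν : 0 ≤ ν) (hy : 0 ≤ y) {g : ℕ → ℝ}
    (hg : ∀ r, |g r| ≤ 2 ^ r) :
    ∑' r : ℕ, g r * r * dunklTerm ν y r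
      = y * ∑' r, g (r + 1) * dunklTerm ν y r
        - 2 * ν * ∑' r, g r * oddIndicator r * dunklTerm ν y r := by
  have hA : Summable fun r : ℕ => g r * r * dunklTerm ν y r :=
    summable_mul_dunklTerm hν hy (C := 1) (a := 4) fun r => by
      rw [abs_mul, Nat.abs_cast, one_mul, show (4 : ℝ) ^ r = 2 ^ r * 2 ^ r by
        rw [← mul_pow]; norm_num]
      exact mul_le_mul (hg r) (by linarith [natCast_add_one_le_two_pow r]) (by positivity)
        (by positivity)
  have hS : Summable fun r : ℕ => g (r + 1) * dunklTerm ν y r :=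
    summable_mul_dunklTerm hν hy (C := 2) (a := 2) fun r => (hg (r + 1)).trans_eq (pow_succ' _ _)
  have hO : Summable fun r : ℕ => g r * oddIndicator r * dunklTerm ν y r :=
    summable_mul_dunklTerm hν hy (C := 1) (a := 2) fun r => by
      rw [abs_mul, abs_of_nonneg (oddIndicator_nonneg r), one_mul]
      exact (mul_le_of_le_one_right (abs_nonneg _) (oddIndicator_le_one r)).trans (hg r)
  have hshift : ∀ r : ℕ, g (r + 1) * (r + 1 : ℕ) * dunklTerm ν y (r + 1)
      = y * (g (r + 1) * dunklTerm ν y r)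
        - 2 * ν * (g (r + 1) * oddIndicator (r + 1) * dunklTerm ν y (r + 1)) := by
    intro r
    rw [Nat.cast_succ, mul_assoc, succ_mul_dunklTerm_succ hν]
    ring
  rw [hA.tsum_eq_zero_add, hO.tsum_eq_zero_add, tsum_congr hshift,
    hS.mul_left y |>.tsum_sub ((summable_nat_add_iff 1).2 hO |>.mul_left _), tsum_mul_left,
    tsum_mul_left]
  simp [oddIndicator_zero]

lemma summable_oddIndicator_mul_dunklTerm (hν : 0 ≤ ν) (hy : 0 ≤ y) :
    Summable fun r => oddIndicator r * dunklTerm ν y r :=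
  summable_mul_dunklTerm hν hy (C := 1) (a := 1) fun r => by
    simpa [abs_of_nonneg (oddIndicator_nonneg r)] using oddIndicator_le_one r

lemma tsum_natCast_mul_dunklTerm (hν : 0 ≤ ν) (hy : 0 ≤ y) :
    ∑' r : ℕ, (r : ℝ) * dunklTerm ν y r = y * eDunkl ν y - 2 * ν * eDunklOdd ν y := by
  rw [eDunkl_eq_tsum_dunklTerm, eDunklOdd]
  simpa using tsum_mul_natCast_mul_dunklTerm hν hy (g := fun _ => 1)
    fun r => by simp [one_le_pow₀]

lemma tsum_oddIndicator_mul_natCast_mul_dunklTerm (hν : 0 ≤ ν) (hy : 0 ≤ y) :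
    ∑' r : ℕ, oddIndicator r * r * dunklTerm ν y r
      = y * (eDunkl ν y - eDunklOdd ν y) - 2 * ν * eDunklOdd ν y := by
  have heven : ∑' r, oddIndicator (r + 1) * dunklTerm ν y r = eDunkl ν y - eDunklOdd ν y := by
    rw [eDunkl_eq_tsum_dunklTerm, eDunklOdd,
      ← (summable_dunklTerm hν hy).tsum_sub (summable_oddIndicator_mul_dunklTerm hν hy)]
    exact tsum_congr fun r => by rw [oddIndicator_succ]; ring
  rw [tsum_mul_natCast_mul_dunklTerm hν hy fun r => ?_, heven]
  · simp only [oddIndicator_mul_self, eDunklOdd]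
  · rw [abs_of_nonneg (oddIndicator_nonneg r)]
    exact (oddIndicator_le_one r).trans (one_le_pow₀ (by norm_num))

lemma tsum_natCast_mul_succ_mul_dunklTerm (hν : 0 ≤ ν) (hy : 0 ≤ y) :
    ∑' r : ℕ, (r : ℝ) * (r + 1) * dunklTerm ν y r
      = (y ^ 2 + (2 - 2 * ν) * y) * eDunkl ν y + (4 * ν ^ 2 - 2 * ν) * eDunklOdd ν y := by
  have hr : ∀ r : ℕ, (r : ℝ) ≤ 2 ^ r := fun r => by linarith [natCast_add_one_le_two_pow r]
  have hR : Summable fun r : ℕ => (r : ℝ) * dunklTerm ν y r :=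
    summable_mul_dunklTerm hν hy (C := 1) (a := 2) fun r => by simpa using hr r
  have hRO : Summable fun r : ℕ => oddIndicator r * r * dunklTerm ν y r :=
    summable_mul_dunklTerm hν hy (C := 1) (a := 2) fun r => by
      rw [abs_mul, abs_of_nonneg (oddIndicator_nonneg r), Nat.abs_cast, one_mul]
      exact (mul_le_of_le_one_left (Nat.cast_nonneg r) (oddIndicator_le_one r)).trans (hr r)
  have hsplit₁ : ∑' r : ℕ, ((r + 1 : ℕ) + 1 : ℝ) * dunklTerm ν y r
      = ∑' r : ℕ, (r : ℝ) * dunklTerm ν y r + 2 * eDunkl ν y := by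
    rw [eDunkl_eq_tsum_dunklTerm, ← tsum_mul_left,
      ← hR.tsum_add ((summable_dunklTerm hν hy).mul_left 2)]
    exact tsum_congr fun r => by push_cast; ring
  have hsplit₂ : ∑' r : ℕ, ((r : ℝ) + 1) * oddIndicator r * dunklTerm ν y r
      = ∑' r : ℕ, oddIndicator r * r * dunklTerm ν y r + eDunklOdd ν y := by
    rw [eDunklOdd, ← hRO.tsum_add (summable_oddIndicator_mul_dunklTerm hν hy)]
    exact tsum_congr fun r => by ring
  rw [show ∑' r : ℕ, (r : ℝ) * (r + 1) * dunklTerm ν y r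
      = ∑' r : ℕ, ((r : ℝ) + 1) * r * dunklTerm ν y r from tsum_congr fun r => by ring,
    tsum_mul_natCast_mul_dunklTerm hν hy fun r => ?_, hsplit₁, hsplit₂,
    tsum_natCast_mul_dunklTerm hν hy, tsum_oddIndicator_mul_natCast_mul_dunklTerm hν hy]
  · ring
  · rw [abs_of_nonneg (by positivity)]
    exact natCast_add_one_le_two_pow r

lemma one_le_eDunkl (hν : 0 ≤ ν) (hy : 0 ≤ y) : 1 ≤ eDunkl ν y :=
  calc 1 = dunklTerm ν y 0 := by simp [dunklTerm, dGamma_zero hν]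
    _ ≤ eDunkl ν y := (summable_dunklTerm hν hy).le_tsum 0 fun r _ => dunklTerm_nonneg hν hy r

lemma eDunklOdd_nonneg (hν : 0 ≤ ν) (hy : 0 ≤ y) : 0 ≤ eDunklOdd ν y :=
  tsum_nonneg fun r => mul_nonneg (oddIndicator_nonneg r) (dunklTerm_nonneg hν hy r)

lemma eDunklOdd_le_eDunkl (hν : 0 ≤ ν) (hy : 0 ≤ y) : eDunklOdd ν y ≤ eDunkl ν y :=
  Summable.tsum_le_tsum (fun r => mul_le_of_le_one_left (dunklTerm_nonneg hν hy r)
    (oddIndicator_le_one r)) (summable_oddIndicator_mul_dunklTerm hν hy)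
    (summable_dunklTerm hν hy)

end DunklSeries

section Operator

open Set

lemma natCast_choose_mul_integral_mul_sq {n : ℕ} (hn : 3 < n) (k : ℕ) :
    (Nat.choose (n + k - 1) k : ℝ) * ∫ s in Ioi (0 : ℝ), s ^ k / (1 + s) ^ (n + k) * s ^ 2
      = (k + 1) * (k + 2) / (((n : ℝ) - 1) * (n - 2) * (n - 3)) := by
  obtain ⟨p, rfl⟩ : ∃ p, n = p + 4 := ⟨n - 4, by omega⟩
  have hn₁ : ((p + 4 : ℕ) : ℝ) - 1 = p + 3 := by push_cast; ring
  have hn₂ : ((p + 4 : ℕ) : ℝ) - 2 = p + 2 := by push_cast; ring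
  have hn₃ : ((p + 4 : ℕ) : ℝ) - 3 = p + 1 := by push_cast; ring
  have hI : ∫ s in Ioi (0 : ℝ), s ^ k / (1 + s) ^ (p + 4 + k) * s ^ 2
      = ∫ s in Ioi (0 : ℝ), s ^ (k + 2) / (1 + s) ^ (k + 2 + p + 2) := by
    rw [show k + 2 + p + 2 = p + 4 + k by omega]
    exact integral_congr_ae (by filter_upwards with s using by ring)
  rw [hI, integral_pow_div_one_add_pow, show k + 2 + p + 1 = k + (p + 3) by omega,
    show p + 4 + k - 1 = k + (p + 3) by omega, Nat.cast_choose ℝ (Nat.le_add_right k _),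
    Nat.add_sub_cancel_left, hn₁, hn₂, hn₃]
  rw [Nat.factorial_succ (k + 1), Nat.factorial_succ k, Nat.factorial_succ (p + 2),
    Nat.factorial_succ (p + 1), Nat.factorial_succ p]
  push_cast
  field_simp
  ring

lemma Tn_sq {ν : ℝ} (hν : 0 ≤ ν) {n : ℕ} (hn : 3 < n) {x : ℝ} (hx : 0 ≤ x) :
    Tn ν n (fun s => s ^ 2) x
      = (((n * x) ^ 2 + (2 - 2 * ν) * (n * x)) * eDunkl ν (n * x)
          + (4 * ν ^ 2 - 2 * ν) * eDunklOdd ν (n * x))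
        / (((n : ℝ) - 2) * (n - 3) * eDunkl ν (n * x)) := by
  rw [Tn]
  -- The binder of `∫` in `Tn` also covers `+ g 0 / eDunkl ν (n * x)`; here `g 0 = 0`.
  simp only [ne_eq, OfNat.ofNat_ne_zero, not_false_eq_true, zero_pow, zero_div, add_zero]
  set y := (n : ℝ) * x
  have hterm : ∀ k : ℕ, (Nat.choose (n + k - 1) k : ℝ) * y ^ (k + 1) / dGamma ν (k + 1)
        * ∫ s in Ioi (0 : ℝ), s ^ k / (1 + s) ^ (n + k) * s ^ 2
      = (((n : ℝ) - 1) * (n - 2) * (n - 3))⁻¹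
          * ((k + 1 : ℕ) * ((k + 1 : ℕ) + 1) * dunklTerm ν y (k + 1)) := by
    intro k
    rw [mul_div_assoc, mul_right_comm, natCast_choose_mul_integral_mul_sq hn, dunklTerm]
    push_cast
    ring
  have hshift : ∑' k : ℕ, ((k + 1 : ℕ) : ℝ) * ((k + 1 : ℕ) + 1) * dunklTerm ν y (k + 1)
      = ∑' r : ℕ, (r : ℝ) * (r + 1) * dunklTerm ν y r := by
    exact Nat.succ_injective.tsum_eq (f := fun r : ℕ => (r : ℝ) * (r + 1) * dunklTerm ν y r)
      fun r hr => ⟨r - 1, Nat.succ_pred_eq_of_ne_zero (by rintro rfl; simp at hr)⟩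
  have : (n : ℝ) - 1 ≠ 0 := by
    have : (3 : ℝ) < n := by exact_mod_cast hn
    linarith
  have : eDunkl ν y ≠ 0 := (zero_lt_one.trans_le (one_le_eDunkl hν (by positivity))).ne'
  rw [tsum_congr hterm, tsum_mul_left, hshift,
    tsum_natCast_mul_succ_mul_dunklTerm hν (by positivity)]
  field_simp

lemma Tn_sq_sub_sq {ν : ℝ} (hν : 0 ≤ ν) {n : ℕ} (hn : 3 < n) {x : ℝ} (hx : 0 ≤ x) :
    Tn ν n (fun s => s ^ 2) x - x ^ 2
      = ((5 * n - 6) * x ^ 2 + (2 - 2 * ν) * n * x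
          + (4 * ν ^ 2 - 2 * ν) * (eDunklOdd ν (n * x) / eDunkl ν (n * x)))
        / (((n : ℝ) - 2) * (n - 3)) := by
  have : eDunkl ν (n * x) ≠ 0 := (zero_lt_one.trans_le (one_le_eDunkl hν (by positivity))).ne'
  have hn' : (3 : ℝ) < n := by exact_mod_cast hn
  have : (n : ℝ) - 2 ≠ 0 := by linarith
  have : (n : ℝ) - 3 ≠ 0 := by linarith
  rw [Tn_sq hν hn hx]
  field_simp
  ring

end Operator

lemma abs_second_moment_numerator_le {ν n x β : ℝ} (hν : 0 ≤ ν) (hn : 6 ≤ 5 * n)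
    (hx : 0 ≤ x) (hβ₀ : 0 ≤ β) (hβ₁ : β ≤ 1) :
    |(5 * n - 6) * x ^ 2 + (2 - 2 * ν) * n * x + (4 * ν ^ 2 - 2 * ν) * β|
      ≤ (5 * n - 6) * x ^ 2 + (4 * ν * n + 2 * n) * x + (4 * ν ^ 2 + 6 * ν) := by
  have hnx : 0 ≤ n * x := mul_nonneg (by linarith) hx
  refine abs_le.2 ⟨?_, ?_⟩ <;>
    nlinarith [mul_nonneg hν hnx, mul_nonneg hν hβ₀, mul_nonneg (sq_nonneg ν) hβ₀,
      mul_nonneg hν (sub_nonneg.2 hβ₁), mul_nonneg (sq_nonneg ν) (sub_nonneg.2 hβ₁),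
      mul_nonneg (by linarith : 0 ≤ 5 * n - 6) (sq_nonneg x)]

theorem stmt2 (ν : ℝ) (hν : 0 ≤ ν) (n : ℕ) (hn : 3 < n) (x : ℝ) (hx : 0 ≤ x) :
    |Tn ν n (fun s => s ^ 2) x - x ^ 2| ≤
      (5 * (n : ℝ) - 6) / ((n : ℝ) ^ 2 - 5 * n + 6) * x ^ 2 +
        (4 * ν * n / ((n : ℝ) ^ 2 - 5 * n + 6) + 2 * n / ((n : ℝ) ^ 2 - 5 * n + 6)) * x +
        (4 * ν ^ 2 + 6 * ν) / ((n : ℝ) ^ 2 - 5 * n + 6) := by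
  have hy : 0 ≤ (n : ℝ) * x := by positivity
  have hE := one_le_eDunkl hν hy
  have hn' : (4 : ℝ) ≤ n := by exact_mod_cast hn
  have hD : (n : ℝ) ^ 2 - 5 * n + 6 = (n - 2) * (n - 3) := by ring
  have hD₀ : 0 < ((n : ℝ) - 2) * (n - 3) := by nlinarith
  have hβ₀ : 0 ≤ eDunklOdd ν (n * x) / eDunkl ν (n * x) :=
    div_nonneg (eDunklOdd_nonneg hν hy) (by linarith)
  have hβ₁ : eDunklOdd ν (n * x) / eDunkl ν (n * x) ≤ 1 :=
    (div_le_one (by linarith)).2 (eDunklOdd_le_eDunkl hν hy)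
  rw [Tn_sq_sub_sq hν hn hx, hD, abs_div, abs_of_pos hD₀]
  calc _ ≤ ((5 * n - 6) * x ^ 2 + (4 * ν * n + 2 * n) * x + (4 * ν ^ 2 + 6 * ν))
        / (((n : ℝ) - 2) * (n - 3)) := by
        gcongr
        exact abs_second_moment_numerator_le hν (by linarith) hx hβ₀ hβ₁
    _ = _ := by ring
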